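/- arXiv:2207.10969 — 3 statements merged into one kernel-verified Lean document; each statement's English description precedes it below -/
import Mathlib

section
/- Let 0 < δ ≤ 1 and let {x_k} be a positive decreasing sequence with 0 < x_k ≤ 1 for all k such that ∑ x_k diverges, ∑ x_k² converges, and lim_{k→∞} x_k·(k+1) = ∞. Then the series ∑_{k=0}^∞ ∏_{t=0}^k (1 - δ x_t) converges (is finite). -/
open Filter Finset

/-!
Once `δ x_k (k + 2) ≥ 2`, which holds eventually because `x_k (k + 1) → ∞`, the partial products
`p_k` satisfy `(k + 2) p_{k+1} ≤ k p_k`. Then `k (k + 1) p_k` is eventually nonincreasing, so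
`p_k = O(1 / k²)` (a case of Raabe's test).
-/

theorem summable_of_eventually_add_two_mul_succ_le {a : ℕ → ℝ} (ha : ∀ k, 0 ≤ a k)
    (h : ∀ᶠ k : ℕ in atTop, ((k : ℝ) + 2) * a (k + 1) ≤ k * a k) : Summable a := by
  obtain ⟨N, hN⟩ := eventually_atTop.mp h
  set b : ℕ → ℝ := fun k => k * (k + 1) * a k with hb
  have hb_le : ∀ k ≥ N, b k ≤ b N := by
    intro k hk
    induction k, hk using Nat.le_induction with
    | base => exact le_rfl
    | succ k hk ih =>
      calc b (k + 1) = (k + 1) * ((k + 2) * a (k + 1)) := by simp only [hb]; push_cast; ring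
        _ ≤ (k + 1) * (k * a k) := mul_le_mul_of_nonneg_left (hN k hk) (by positivity)
        _ = b k := by ring
        _ ≤ b N := ih
  refine summable_of_isBigO_nat (Real.summable_one_div_nat_pow.mpr one_lt_two)
    (Asymptotics.IsBigO.of_bound (b N) ?_)
  filter_upwards [eventually_ge_atTop (max N 1)] with k hk
  have hk1 : (1 : ℝ) ≤ k := by exact_mod_cast le_of_max_le_right hk
  rw [Real.norm_of_nonneg (ha k), Real.norm_of_nonneg (by positivity), mul_one_div,
    le_div_iff₀ (by positivity)]
  calc a k * (k : ℝ) ^ 2 ≤ b k := by simp only [hb]; nlinarith [ha k]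
    _ ≤ b N := hb_le k (le_of_max_le_left hk)

theorem stmt_1_general (δ : ℝ) (hδ0 : 0 < δ) (hδ1 : δ ≤ 1)
    (x : ℕ → ℝ)
    (hpos : ∀ k, 0 < x k) (hle : ∀ k, x k ≤ 1)
    (hfast : Tendsto (fun k : ℕ => x k * ((k : ℝ) + 1)) atTop atTop) :
    Summable (fun k : ℕ => ∏ t ∈ Finset.range (k + 1), (1 - δ * x t)) := by
  have hfactor : ∀ t, 0 ≤ 1 - δ * x t := fun t => by
    nlinarith [mul_le_mul hδ1 (hle t) (hpos t).le zero_le_one]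
  have hlarge : ∀ᶠ k : ℕ in atTop, 2 ≤ δ * x (k + 1) * ((k : ℝ) + 2) := by
    have hshift := (tendsto_add_atTop_iff_nat 1).mpr hfast
    refine ((hshift.const_mul_atTop hδ0).eventually_ge_atTop 2).mono fun k hk => ?_
    simp only [Nat.cast_add, Nat.cast_one] at hk
    linarith
  refine summable_of_eventually_add_two_mul_succ_le
    (fun k => prod_nonneg fun t _ => hfactor t) (hlarge.mono fun k hk => ?_)
  rw [prod_range_succ _ (k + 1)]
  have hprod := prod_nonneg fun t (_ : t ∈ range (k + 1)) => hfactor t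
  nlinarith

theorem stmt_1 (δ : ℝ) (hδ0 : 0 < δ) (hδ1 : δ ≤ 1)
    (x : ℕ → ℝ) (hdec : ∀ k, x (k + 1) ≤ x k)
    (hpos : ∀ k, 0 < x k) (hle : ∀ k, x k ≤ 1)
    (hdiv : Tendsto (fun n => ∑ k ∈ Finset.range n, x k) atTop atTop)
    (hsq : Summable fun k => (x k) ^ 2)
    (hfast : Tendsto (fun k : ℕ => x k * ((k : ℝ) + 1)) atTop atTop) :
    Summable (fun k : ℕ => ∏ t ∈ Finset.range (k + 1), (1 - δ * x t)) :=
  stmt_1_general δ hδ0 hδ1 x hpos hle hfast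
end

section
/- Let δ > 0 and let {β_t} be a positive sequence with lim_{t→∞} t·β_t = ∞ where moreover β_t ·(t+1) ≥ 2/δ for all t ≥ M for some integer M. Then ∑_{k=M}^∞ exp( -δ ∑_{t=M}^k β_t ) ≤ M² e^{4F} ∑_{k=M}^∞ k^{-2} < ∞, where F bounds |∑_{i=0}^{t} 1/(1+i) - ln t| for t ≥ M. -/
/-!
Summing `2 / (1 + t) ≤ δ β_t` over `M ≤ t ≤ k` and comparing the harmonic sums with logarithms
(error at most `F` at each end) gives `δ ∑_{t=M}^k β_t ≥ 2 (log k - log M - 2F)`, so the `k`-th term is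
at most `exp (-2 (log k - log M - 2F)) = M² e^{4F} k⁻²`, which is summable.
-/

open Filter Finset Real

lemma Finset.sum_Icc_eq_sum_range_sub_sum_range {G : Type*} [AddCommGroup G] (f : ℕ → G)
    {M k : ℕ} (h : M ≤ k + 1) :
    ∑ t ∈ Icc M k, f t = ∑ i ∈ range (k + 1), f i - ∑ i ∈ range M, f i := by
  rw [← Ico_add_one_right_eq_Icc, sum_Ico_eq_sub _ h]

lemma two_mul_inv_le_mul_of_div_le {δ b x : ℝ} (hδ : 0 < δ) (hx : 0 < x) (h : 2 / δ ≤ b * x) :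
    2 * x⁻¹ ≤ δ * b := by
  rw [div_le_iff₀ hδ] at h
  rw [mul_inv_le_iff₀' hx]
  linarith

lemma log_sub_log_sub_two_mul_le_sum_Icc_inv {M k : ℕ} {F : ℝ} (hMk : M ≤ k)
    (hFM : |∑ i ∈ range (M + 1), (1 + (i : ℝ))⁻¹ - log M| ≤ F)
    (hFk : |∑ i ∈ range (k + 1), (1 + (i : ℝ))⁻¹ - log k| ≤ F) :
    log k - log M - 2 * F ≤ ∑ t ∈ Icc M k, (1 + (t : ℝ))⁻¹ := by
  have hrange : ∑ i ∈ range M, (1 + (i : ℝ))⁻¹ ≤ ∑ i ∈ range (M + 1), (1 + (i : ℝ))⁻¹ := by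
    rw [sum_range_succ]
    linarith [inv_pos.2 (by positivity : (0 : ℝ) < 1 + M)]
  rw [sum_Icc_eq_sum_range_sub_sum_range _ (by omega)]
  linarith [(abs_le.1 hFM).2, (abs_le.1 hFk).1]

lemma exp_neg_two_mul_log_sub_log_sub {a b : ℝ} (ha : 0 < a) (hb : 0 < b) (c : ℝ) :
    exp (-2 * (log b - log a - 2 * c)) = a ^ 2 * exp (4 * c) * b ^ (-2 : ℤ) := by
  have hsplit : -2 * (log b - log a - 2 * c) = log (a ^ 2) + 4 * c - log (b ^ 2) := by
    rw [log_pow, log_pow]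
    push_cast
    ring
  rw [hsplit, exp_sub, exp_add, exp_log (by positivity), exp_log (by positivity), zpow_neg,
    zpow_ofNat, div_eq_mul_inv]

theorem exp_neg_mul_sum_Icc_le {δ F : ℝ} {β : ℕ → ℝ} {M k : ℕ} (hδ : 0 < δ) (hM : 1 ≤ M)
    (hMk : M ≤ k) (hMβ : ∀ t, M ≤ t → 2 / δ ≤ β t * ((t : ℝ) + 1))
    (hF : ∀ t, M ≤ t → |∑ i ∈ range (t + 1), (1 + (i : ℝ))⁻¹ - log t| ≤ F) :
    exp (-δ * ∑ t ∈ Icc M k, β t) ≤ (M : ℝ) ^ 2 * exp (4 * F) * (k : ℝ) ^ (-2 : ℤ) := by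
  have hharmonic : ∑ t ∈ Icc M k, 2 * (1 + (t : ℝ))⁻¹ ≤ δ * ∑ t ∈ Icc M k, β t := by
    rw [mul_sum]
    refine sum_le_sum fun t ht => two_mul_inv_le_mul_of_div_le hδ (by positivity) ?_
    rw [add_comm]
    exact hMβ t (mem_Icc.1 ht).1
  have hlog := log_sub_log_sub_two_mul_le_sum_Icc_inv hMk (hF M le_rfl) (hF k hMk)
  rw [← exp_neg_two_mul_log_sub_log_sub (by exact_mod_cast hM) (by exact_mod_cast hM.trans hMk),
    exp_le_exp]
  rw [← mul_sum] at hharmonic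
  linarith

lemma summable_natCast_add_zpow_neg_two (M : ℕ) :
    Summable (fun j : ℕ => ((M : ℝ) + (j : ℝ)) ^ (-2 : ℤ)) := by
  refine ((summable_nat_add_iff M).2 (Real.summable_nat_pow_inv.2 one_lt_two)).congr fun j => ?_
  push_cast
  rw [zpow_neg, zpow_ofNat, add_comm]

theorem stmt_13_general (δ : ℝ) (hδ : 0 < δ) (β : ℕ → ℝ)
    (M : ℕ) (hM : 1 ≤ M)
    (hMβ : ∀ t, M ≤ t → 2 / δ ≤ β t * ((t : ℝ) + 1))
    (F : ℝ)
    (hF : ∀ t, M ≤ t → |(∑ i ∈ Finset.range (t + 1), (1 + (i : ℝ))⁻¹) - Real.log t| ≤ F) :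
    Summable (fun j : ℕ => Real.exp (-δ * ∑ t ∈ Finset.Icc M (M + j), β t)) ∧
    Summable (fun j : ℕ => ((M : ℝ) + (j : ℝ)) ^ (-2 : ℤ)) ∧
    ∑' j : ℕ, Real.exp (-δ * ∑ t ∈ Finset.Icc M (M + j), β t) ≤
      (M : ℝ) ^ 2 * Real.exp (4 * F) * ∑' j : ℕ, ((M : ℝ) + (j : ℝ)) ^ (-2 : ℤ) := by
  have hterm (j : ℕ) : exp (-δ * ∑ t ∈ Icc M (M + j), β t) ≤
      (M : ℝ) ^ 2 * exp (4 * F) * ((M : ℝ) + (j : ℝ)) ^ (-2 : ℤ) := by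
    simpa using exp_neg_mul_sum_Icc_le hδ hM (M.le_add_right j) hMβ hF
  have hg := summable_natCast_add_zpow_neg_two M
  have hf := (hg.mul_left _).of_nonneg_of_le (fun j => (exp_pos _).le) hterm
  refine ⟨hf, hg, ?_⟩
  rw [← tsum_mul_left]
  exact hf.tsum_le_tsum hterm (hg.mul_left _)

theorem stmt_13 (δ : ℝ) (hδ : 0 < δ) (β : ℕ → ℝ) (hβ : ∀ t, 0 < β t)
    (hlim : Tendsto (fun t : ℕ => (t : ℝ) * β t) atTop atTop)
    (M : ℕ) (hM : 1 ≤ M)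
    (hMβ : ∀ t, M ≤ t → 2 / δ ≤ β t * ((t : ℝ) + 1))
    (F : ℝ)
    (hF : ∀ t, M ≤ t → |(∑ i ∈ Finset.range (t + 1), (1 + (i : ℝ))⁻¹) - Real.log t| ≤ F) :
    Summable (fun j : ℕ => Real.exp (-δ * ∑ t ∈ Finset.Icc M (M + j), β t)) ∧
    Summable (fun j : ℕ => ((M : ℝ) + (j : ℝ)) ^ (-2 : ℤ)) ∧
    ∑' j : ℕ, Real.exp (-δ * ∑ t ∈ Finset.Icc M (M + j), β t) ≤
      (M : ℝ) ^ 2 * Real.exp (4 * F) * ∑' j : ℕ, ((M : ℝ) + (j : ℝ)) ^ (-2 : ℤ) :=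
  stmt_13_general δ hδ β M hM hMβ F hF
end

section
/- Let λ ∈ (1/2, 1) and write γ_k^t = (t+1)^{-λ}/∑_{s=0}^k (s+1)^{-λ}. If α_t = α_0(t+1)^{-λ_α} and β_t = β_0(t+1)^{-λ_β} with 1/2 < λ_α ≤ 1, 1/2 < λ_β < 1, λ ≥ λ_α, then lim_{k→∞} ∑_{t=0}^k (γ_k^t/α_t)·β_t² = 0 and lim_{k→∞} ∑_{t=0}^k γ_k^t·α_t/β_t = 0 provided 2λ_β > λ_α and λ_α > λ_β. -/
/-!
Both sums are averages of a sequence `c (t+1)^(-μ)` with `μ > 0` (namely `μ = 2λ_β - λ_α` and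
`μ = λ_α - λ_β`) against the weights `(t+1)^(-λ)`. Since `λ ≤ 1` these weights are not summable,
so the averages inherit the limit `0` of the averaged sequence (Stolz–Cesàro).
-/

open Filter Finset Real

theorem tendsto_sum_range_rpow_neg_atTop {p : ℝ} (hp : p ≤ 1) :
    Tendsto (fun n : ℕ => ∑ s ∈ range n, ((s : ℝ) + 1) ^ (-p)) atTop atTop := by
  refine (not_summable_iff_tendsto_nat_atTop_of_nonneg fun s => by positivity).mp fun h => ?_
  have : Summable fun n : ℕ => (n : ℝ) ^ (-p) :=
    (summable_nat_add_iff 1).mp (by exact_mod_cast h)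
  exact absurd (summable_nat_rpow.mp this) (by linarith)

theorem div_mul_sq_rpow_eq {x : ℝ} (hx : 0 < x) (S a b lam lα lβ : ℝ) :
    x ^ (-lam) / S / (a * x ^ (-lα)) * (b * x ^ (-lβ)) ^ 2
      = b ^ 2 / a * x ^ (-(lam + (2 * lβ - lα))) / S := by
  have : x ^ (-(lam + (2 * lβ - lα))) = x ^ (-lam) * (x ^ (-lα))⁻¹ * (x ^ (-lβ)) ^ 2 := by
    rw [← rpow_neg hx.le, ← rpow_natCast, ← rpow_mul hx.le, ← rpow_add hx, ← rpow_add hx]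
    ring_nf
  rw [this]; ring

theorem mul_div_rpow_eq {x : ℝ} (hx : 0 < x) (S a b lam lα lβ : ℝ) :
    x ^ (-lam) / S * (a * x ^ (-lα)) / (b * x ^ (-lβ))
      = a / b * x ^ (-(lam + (lα - lβ))) / S := by
  have : x ^ (-(lam + (lα - lβ))) = x ^ (-lam) * x ^ (-lα) * (x ^ (-lβ))⁻¹ := by
    rw [← rpow_neg hx.le, ← rpow_add hx, ← rpow_add hx]
    ring_nf
  rw [this]; ring

theorem isLittleO_rpow_neg_add {p q : ℝ} (c : ℝ) (hq : 0 < q) :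
    (fun t : ℕ => c * ((t : ℝ) + 1) ^ (-(p + q))) =o[atTop] fun t : ℕ => ((t : ℝ) + 1) ^ (-p) := by
  have hx : ∀ t : ℕ, (0 : ℝ) < (t : ℝ) + 1 := fun t => by positivity
  rw [Asymptotics.isLittleO_iff_tendsto fun t h => absurd h (rpow_pos_of_pos (hx t) _).ne']
  have : Tendsto (fun t : ℕ => c * ((t : ℝ) + 1) ^ (-q)) atTop (nhds 0) := by
    simpa using ((tendsto_rpow_neg_atTop hq).comp
      (tendsto_atTop_add_const_right atTop 1 tendsto_natCast_atTop_atTop)).const_mul c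
  refine this.congr fun t => ?_
  rw [mul_div_assoc, ← rpow_sub (hx t)]
  ring_nf

theorem tendsto_sum_rpow_neg_add_div_sum_rpow_neg {p q : ℝ} (c : ℝ) (hp : p ≤ 1) (hq : 0 < q) :
    Tendsto (fun k : ℕ => ∑ t ∈ range (k + 1),
      c * ((t : ℝ) + 1) ^ (-(p + q)) / ∑ s ∈ range (k + 1), ((s : ℝ) + 1) ^ (-p))
      atTop (nhds 0) := by
  simp_rw [← sum_div]
  have := (isLittleO_rpow_neg_add c hq).sum_range (fun t => by positivity)
    (tendsto_sum_range_rpow_neg_atTop hp)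
  exact this.tendsto_div_nhds_zero.comp (tendsto_add_atTop_nat 1)

theorem stmt_18_general (lam lα lβ α₀ β₀ : ℝ)
    (hlam2 : lam < 1)
    (hαβ : lα < 2 * lβ) (hβα : lβ < lα)
    (γ : ℕ → ℕ → ℝ) (α β : ℕ → ℝ)
    (hγ : ∀ k t : ℕ, γ k t = ((t : ℝ) + 1) ^ (-lam) /
      ∑ s ∈ Finset.range (k + 1), ((s : ℝ) + 1) ^ (-lam))
    (hα : ∀ t : ℕ, α t = α₀ * ((t : ℝ) + 1) ^ (-lα))
    (hβ : ∀ t : ℕ, β t = β₀ * ((t : ℝ) + 1) ^ (-lβ)) :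
    Tendsto (fun k : ℕ => ∑ t ∈ Finset.range (k + 1), γ k t / α t * (β t) ^ 2)
      atTop (nhds 0) ∧
    Tendsto (fun k : ℕ => ∑ t ∈ Finset.range (k + 1), γ k t * α t / β t)
      atTop (nhds 0) := by
  constructor
  · refine (tendsto_sum_rpow_neg_add_div_sum_rpow_neg (β₀ ^ 2 / α₀) hlam2.le
      (sub_pos.mpr hαβ)).congr fun k => sum_congr rfl fun t _ => ?_
    rw [hγ, hα, hβ, div_mul_sq_rpow_eq (by positivity)]
  · refine (tendsto_sum_rpow_neg_add_div_sum_rpow_neg (α₀ / β₀) hlam2.le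
      (sub_pos.mpr hβα)).congr fun k => sum_congr rfl fun t _ => ?_
    rw [hγ, hα, hβ, mul_div_rpow_eq (by positivity)]

theorem stmt_18 (lam lα lβ α₀ β₀ : ℝ)
    (hlam1 : 1 / 2 < lam) (hlam2 : lam < 1)
    (hlα1 : 1 / 2 < lα) (hlα2 : lα ≤ 1)
    (hlβ1 : 1 / 2 < lβ) (hlβ2 : lβ < 1)
    (hlamα : lα ≤ lam) (hαβ : lα < 2 * lβ) (hβα : lβ < lα)
    (hα₀ : 0 < α₀) (hβ₀ : 0 < β₀)
    (γ : ℕ → ℕ → ℝ) (α β : ℕ → ℝ)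
    (hγ : ∀ k t : ℕ, γ k t = ((t : ℝ) + 1) ^ (-lam) /
      ∑ s ∈ Finset.range (k + 1), ((s : ℝ) + 1) ^ (-lam))
    (hα : ∀ t : ℕ, α t = α₀ * ((t : ℝ) + 1) ^ (-lα))
    (hβ : ∀ t : ℕ, β t = β₀ * ((t : ℝ) + 1) ^ (-lβ)) :
    Tendsto (fun k : ℕ => ∑ t ∈ Finset.range (k + 1), γ k t / α t * (β t) ^ 2)
      atTop (nhds 0) ∧
    Tendsto (fun k : ℕ => ∑ t ∈ Finset.range (k + 1), γ k t * α t / β t)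
      atTop (nhds 0) :=
  stmt_18_general lam lα lβ α₀ β₀ hlam2 hαβ hβα γ α β hγ hα hβ
end
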